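/- (Temporal ordering and disjointness of the confidence intervals in Lemma 1.) Let τ > 0, σ_c ∈ (0, τ), σ > 0, m ≥ 1 an integer, μ = (m + 1/2)·τ, and let j ≥ 1 be an integer with j < (τ − σ_c)/(σ_c + σ). Fix any t₀ ∈ ((τ − σ_c)/2, (τ + σ_c)/2), and define the intervals C^in_i = (i·(μ − σ/2), i·(μ + σ/2)) for 0 ≤ i ≤ j, C^out_0 = ((τ − σ_c)/2, (τ + σ_c)/2), and C^out_i = (i·(μ − σ_c/2) + t₀, i·(μ + σ_c/2) + t₀) for 1 ≤ i ≤ j. Then these intervals are pairwise disjoint and temporally ordered: for every 0 ≤ i ≤ j, the supremum of C^in_i is at most the infimum of C^out_i, and for every 0 ≤ i ≤ j − 1, the supremum of C^out_i is at most the infimum of C^in_{i+1}. -/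
import Mathlib


/-- Confidence interval of the `i`-th input tick time in Lemma 1 of the paper:
`C^in_i = (i·(μ − σ/2), i·(μ + σ/2))`. -/
def inInterval (μ σ : ℝ) (i : ℕ) : Set ℝ := Set.Ioo (i * (μ - σ / 2)) (i * (μ + σ / 2))

/-- Lower endpoint of the confidence interval of the `i`-th output tick time in Lemma 1. -/
noncomputable def outLo (τ σc μ t₀ : ℝ) : ℕ → ℝ
  | 0 => (τ - σc) / 2
  | (i + 1) => (i + 1 : ℕ) * (μ - σc / 2) + t₀

/-- Upper endpoint of the confidence interval of the `i`-th output tick time in Lemma 1. -/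
noncomputable def outHi (τ σc μ t₀ : ℝ) : ℕ → ℝ
  | 0 => (τ + σc) / 2
  | (i + 1) => (i + 1 : ℕ) * (μ + σc / 2) + t₀

/-- Confidence interval of the `i`-th output tick time in Lemma 1 of the paper:
`C^out_0 = ((τ − σc)/2, (τ + σc)/2)` and
`C^out_i = (i·(μ − σc/2) + t₀, i·(μ + σc/2) + t₀)` for `i ≥ 1`. -/
def outInterval (τ σc μ t₀ : ℝ) (i : ℕ) : Set ℝ :=
  Set.Ioo (outLo τ σc μ t₀ i) (outHi τ σc μ t₀ i)


private lemma disjoint_Ioo_of_le' {a b c d : ℝ} (h : b ≤ c) :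
    Disjoint (Set.Ioo a b) (Set.Ioo c d) :=
  Set.disjoint_left.mpr fun x hx hy => absurd (hx.2.trans_le (h.trans hy.1.le)) (lt_irrefl x)

/-- **Temporal ordering and disjointness of the confidence intervals in Lemma 1.**
Let `τ > 0`, `σc ∈ (0, τ)`, `σ > 0`, `m ≥ 1` an integer, `μ = (m + 1/2)·τ`, and let
`j ≥ 1` be an integer with `j < (τ − σc)/(σc + σ)`.  Fix any
`t₀ ∈ ((τ − σc)/2, (τ + σc)/2)`.  Then the intervals `C^in_0, …, C^in_j` and
`C^out_0, …, C^out_j` are pairwise disjoint and temporally ordered: for every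
`0 ≤ i ≤ j`, the supremum of `C^in_i` is at most the infimum of `C^out_i`, and for
every `0 ≤ i ≤ j − 1`, the supremum of `C^out_i` is at most the infimum of
`C^in_{i+1}`. -/
theorem confidence_intervals_ordered (τ σc σ μ t₀ : ℝ) (m j : ℕ)
    (hτ : 0 < τ) (hσc : σc ∈ Set.Ioo 0 τ) (hσ : 0 < σ) (hm : 1 ≤ m)
    (hμ : μ = (m + 1 / 2) * τ) (hj : 1 ≤ j)
    (hjlt : (j : ℝ) < (τ - σc) / (σc + σ))
    (ht₀ : t₀ ∈ Set.Ioo ((τ - σc) / 2) ((τ + σc) / 2)) :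
    (∀ i ≤ j, ∀ i' ≤ j,
        (i ≠ i' → Disjoint (inInterval μ σ i) (inInterval μ σ i')) ∧
        (i ≠ i' → Disjoint (outInterval τ σc μ t₀ i) (outInterval τ σc μ t₀ i')) ∧
        Disjoint (inInterval μ σ i) (outInterval τ σc μ t₀ i')) ∧
    (∀ i ≤ j, (i : ℝ) * (μ + σ / 2) ≤ outLo τ σc μ t₀ i) ∧
    (∀ i : ℕ, i + 1 ≤ j → outHi τ σc μ t₀ i ≤ ((i : ℝ) + 1) * (μ - σ / 2)) := by
  obtain ⟨hσc0, hσcτ⟩ := hσc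
  obtain ⟨ht₀1, ht₀2⟩ := ht₀
  have hss : 0 < σc + σ := by linarith
  have hjmul : (j : ℝ) * (σc + σ) < τ - σc := by rwa [lt_div_iff₀ hss] at hjlt
  have hj1 : (1 : ℝ) ≤ (j : ℝ) := by exact_mod_cast hj
  have hστ : σc + σ < τ - σc := by nlinarith
  have hm1 : (1 : ℝ) ≤ (m : ℝ) := by exact_mod_cast hm
  have hμ3 : 3 / 2 * τ ≤ μ := by rw [hμ]; nlinarith
  have hμlo : τ ≤ μ - σ / 2 := by linarith
  have hμhi : (0 : ℝ) ≤ μ + σ / 2 := by linarith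
  have hlh : μ - σ / 2 ≤ μ + σ / 2 := by linarith
  have hA : ∀ i ≤ j, (i : ℝ) * (μ + σ / 2) ≤ outLo τ σc μ t₀ i := by
    intro i hi
    cases i with
    | zero => simp [outLo]; linarith
    | succ n =>
      have hn : ((n : ℝ) + 1) ≤ (j : ℝ) := by exact_mod_cast hi
      simp only [outLo]
      push_cast
      nlinarith [mul_le_mul_of_nonneg_right hn hss.le]
  have hB : ∀ i : ℕ, i + 1 ≤ j → outHi τ σc μ t₀ i ≤ ((i : ℝ) + 1) * (μ - σ / 2) := by
    intro i hi
    cases i with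
    | zero => simp [outHi]; linarith
    | succ n =>
      have hn : ((n : ℝ) + 2) ≤ (j : ℝ) := by exact_mod_cast hi
      simp only [outHi]
      push_cast
      nlinarith [mul_le_mul_of_nonneg_right hn hss.le]
  have hlohi : ∀ i : ℕ, outLo τ σc μ t₀ i ≤ outHi τ σc μ t₀ i := by
    intro i
    cases i with
    | zero => simp [outLo, outHi]; linarith
    | succ n =>
      simp only [outLo, outHi]
      push_cast
      nlinarith [Nat.cast_nonneg (α := ℝ) n]
  have keyIO : ∀ a b : ℕ, a ≤ b → b ≤ j →
      (a : ℝ) * (μ + σ / 2) ≤ outLo τ σc μ t₀ b := by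
    intro a b hab hb
    calc (a : ℝ) * (μ + σ / 2) ≤ (b : ℝ) * (μ + σ / 2) :=
          mul_le_mul_of_nonneg_right (by exact_mod_cast hab) hμhi
      _ ≤ outLo τ σc μ t₀ b := hA b hb
  have keyOI : ∀ a b : ℕ, a < b → b ≤ j →
      outHi τ σc μ t₀ a ≤ (b : ℝ) * (μ - σ / 2) := by
    intro a b hab hb
    have h1 : ((a : ℝ) + 1) ≤ (b : ℝ) := by exact_mod_cast hab
    calc outHi τ σc μ t₀ a ≤ ((a : ℝ) + 1) * (μ - σ / 2) := hB a (hab.trans_le hb)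
      _ ≤ (b : ℝ) * (μ - σ / 2) := mul_le_mul_of_nonneg_right h1 (by linarith)
  have keyII : ∀ a b : ℕ, a < b → b ≤ j →
      (a : ℝ) * (μ + σ / 2) ≤ (b : ℝ) * (μ - σ / 2) := by
    intro a b hab hb
    exact ((keyIO a a le_rfl (hab.le.trans hb)).trans (hlohi a)).trans (keyOI a b hab hb)
  have keyOO : ∀ a b : ℕ, a < b → b ≤ j →
      outHi τ σc μ t₀ a ≤ outLo τ σc μ t₀ b := by
    intro a b hab hb
    calc outHi τ σc μ t₀ a ≤ (b : ℝ) * (μ - σ / 2) := keyOI a b hab hb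
      _ ≤ (b : ℝ) * (μ + σ / 2) := mul_le_mul_of_nonneg_left hlh (Nat.cast_nonneg b)
      _ ≤ outLo τ σc μ t₀ b := hA b hb
  refine ⟨?_, hA, hB⟩
  intro i hi i' hi'
  refine ⟨?_, ?_, ?_⟩
  · intro hne
    rcases hne.lt_or_gt with h | h
    · exact disjoint_Ioo_of_le' (keyII i i' h hi')
    · exact (disjoint_Ioo_of_le' (keyII i' i h hi)).symm
  · intro hne
    rcases hne.lt_or_gt with h | h
    · exact disjoint_Ioo_of_le' (keyOO i i' h hi')
    · exact (disjoint_Ioo_of_le' (keyOO i' i h hi)).symm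
  · rcases le_or_gt i i' with h | h
    · exact disjoint_Ioo_of_le' (keyIO i i' h hi')
    · exact (disjoint_Ioo_of_le' (keyOI i' i h hi)).symm
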